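/- Let α, ε ∈ ℝ and let x ∈ ℝ³ with ‖x‖ = 1. Denote by (e₁, e₂, e₃) the standard basis of ℝ³ and define the linear map σ(x) : ℝ³ → ℝ³ by σ(x)v = ε·(-x×v - α x×(x×v)). Then the squared Frobenius norm of σ(x) equals 2ε²(α² + 1), i.e. Σ_{i=1}^{3} ‖σ(x)eᵢ‖² = 2ε²(α² + 1). (This is the algebraic identity underlying the fact that for the Itô stochastic Landau–Lifshitz equation one has d(‖y_t‖²) = 2ε²(α²+1)dt, so that H(t) = 1 + 2ε²(α²+1)t in the invariantization.) -/

import Mathlib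

noncomputable def cross (u v : EuclideanSpace ℝ (Fin 3)) : EuclideanSpace ℝ (Fin 3) :=
  (WithLp.equiv 2 (Fin 3 → ℝ)).symm
    (crossProduct ((WithLp.equiv 2 (Fin 3 → ℝ)) u) ((WithLp.equiv 2 (Fin 3 → ℝ)) v))

/-!
The Lagrange identity gives `‖x × v‖² = ‖x‖²‖v‖² - ⟪x, v⟫²`, and since `x × v ⟂ x` it also gives
`‖x × (x × v)‖ = ‖x‖ ‖x × v‖`. As `x × (x × v) ⟂ x × v`, Pythagoras yields
`‖σ(x)v‖² = ε²(1 + α²‖x‖²)(‖x‖²‖v‖² - ⟪x, v⟫²)`. Summing over the standard basis, where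
`∑ ‖eᵢ‖² = 3` and `∑ ⟪x, eᵢ⟫² = ‖x‖²` by Parseval, gives `2ε²‖x‖²(1 + α²‖x‖²)`.
-/

open scoped RealInnerProductSpace Matrix

theorem EuclideanSpace.real_inner_eq_dotProduct {ι : Type*} [Fintype ι]
    (x y : EuclideanSpace ℝ ι) : ⟪x, y⟫ = x.ofLp ⬝ᵥ y.ofLp := by
  rw [inner_eq_star_dotProduct, star_trivial, dotProduct_comm]

open EuclideanSpace

section CrossProduct

variable (u v w y : EuclideanSpace ℝ (Fin 3))

theorem ofLp_cross : (cross u v).ofLp = u.ofLp ⨯₃ v.ofLp := rfl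

theorem inner_cross_cross : ⟪cross u v, cross w y⟫ = ⟪u, w⟫ * ⟪v, y⟫ - ⟪u, y⟫ * ⟪v, w⟫ := by
  simp only [real_inner_eq_dotProduct, ofLp_cross, cross_dot_cross]

theorem inner_self_cross : ⟪u, cross u v⟫ = 0 := by
  rw [real_inner_eq_dotProduct, ofLp_cross, dot_self_cross]

theorem inner_cross_self : ⟪v, cross u v⟫ = 0 := by
  rw [real_inner_eq_dotProduct, ofLp_cross, dot_cross_self]

theorem norm_cross_sq : ‖cross u v‖ ^ 2 = ‖u‖ ^ 2 * ‖v‖ ^ 2 - ⟪u, v⟫ ^ 2 := by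
  rw [← real_inner_self_eq_norm_sq, inner_cross_cross, real_inner_self_eq_norm_sq,
    real_inner_self_eq_norm_sq, real_inner_comm v u]
  ring

theorem norm_cross_cross_self_sq : ‖cross u (cross u v)‖ ^ 2 = ‖u‖ ^ 2 * ‖cross u v‖ ^ 2 := by
  rw [norm_cross_sq, inner_self_cross, sq (0 : ℝ), mul_zero, sub_zero]

end CrossProduct

noncomputable def landauLifshitzDiffusion (α ε : ℝ) (x v : EuclideanSpace ℝ (Fin 3)) :
    EuclideanSpace ℝ (Fin 3) :=
  ε • (-(cross x v) - α • cross x (cross x v))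

theorem norm_landauLifshitzDiffusion_sq (α ε : ℝ) (x v : EuclideanSpace ℝ (Fin 3)) :
    ‖landauLifshitzDiffusion α ε x v‖ ^ 2
      = ε ^ 2 * (1 + α ^ 2 * ‖x‖ ^ 2) * (‖x‖ ^ 2 * ‖v‖ ^ 2 - ⟪x, v⟫ ^ 2) := by
  have horth : ⟪-cross x v, α • cross x (cross x v)⟫ = 0 := by
    rw [inner_neg_left, real_inner_smul_right, inner_cross_self, mul_zero, neg_zero]
  rw [landauLifshitzDiffusion, norm_smul, mul_pow, Real.norm_eq_abs, sq_abs, norm_sub_sq_real,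
    horth, norm_neg, norm_smul, mul_pow, Real.norm_eq_abs, sq_abs, norm_cross_cross_self_sq,
    norm_cross_sq]
  ring

theorem sum_norm_landauLifshitzDiffusion_single_sq (α ε : ℝ) (x : EuclideanSpace ℝ (Fin 3)) :
    ∑ i, ‖landauLifshitzDiffusion α ε x (single i 1)‖ ^ 2
      = 2 * ε ^ 2 * ‖x‖ ^ 2 * (1 + α ^ 2 * ‖x‖ ^ 2) := by
  have hparseval : ∑ i : Fin 3, ⟪x, single i 1⟫ ^ 2 = ‖x‖ ^ 2 := by
    simpa only [basisFun_apply] using (basisFun (Fin 3) ℝ).sum_sq_inner_left x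
  simp only [norm_landauLifshitzDiffusion_sq, ← Finset.mul_sum, Finset.sum_sub_distrib,
    hparseval, PiLp.norm_single, norm_one, one_pow, mul_one, Finset.sum_const, Finset.card_univ,
    Fintype.card_fin]
  ring

/-- the squared Frobenius norm of the Landau–Lifshitz diffusion map
`σ(x)v = ε(-x×v - α x×(x×v))` at a point `x` of the unit sphere equals `2ε²(α²+1)`. -/
theorem landau_lifshitz_frobenius_norm
    (α ε : ℝ) (x : EuclideanSpace ℝ (Fin 3)) (hx : ‖x‖ = 1) :
    ∑ i : Fin 3,
      ‖ε • (-(cross x (EuclideanSpace.single i 1))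
        - α • cross x (cross x (EuclideanSpace.single i 1)))‖ ^ 2
      = 2 * ε ^ 2 * (α ^ 2 + 1) := by
  calc _ = ∑ i, ‖landauLifshitzDiffusion α ε x (single i 1)‖ ^ 2 := rfl
    _ = _ := by rw [sum_norm_landauLifshitzDiffusion_single_sq, hx]; ring
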